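/- Fix an integer k ≥ 2 and integers m₁, …, m_k ≥ 0. There exists a constant C = C(k, m₁, …, m_k) > 0 such that for all positive integers N and a, the sum of ∏_{i=1}^k φ²_{n_i, m_i} over all k-tuples of nonnegative integers (n₁, …, n_k) with n₁ + … + n_k = N for which there exist indices i ≠ j with n_i > a and n_j > a, is at most C · (27/2)^N · N^{-5/2} · a^{-3/2}. (Equivalently: the number of triangulations of k disjoint polygons with boundary sizes m₁+2, …, m_k+2 and N internal vertices in total such that at least two of the polygons contain more than a internal vertices each is at most C · (27/2)^N · N^{-5/2} · a^{-3/2}.) -/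

import Mathlib

/-
Factorial estimates give `φ²_{n,m} ≤ K_m · 2ⁿ · C(3n, n) / (n + 1)²`, and induction on the ratio of
consecutive terms gives `C(3n, n)² (n + 1) ≤ (729 / 16)ⁿ`; hence `φ²_{n,m} ≤ K_m (27/2)ⁿ ψ(n)` with
`ψ(n) = (n + 1)^(-5/2)`. In a tuple with `∑ nᵢ = N` a largest entry `n_p ≥ N / k` contributes
`ψ(n_p) ≤ k^(5/2) N^(-5/2)`. As `n_p` is determined by the other entries, what remains of the sum
over tuples is at most a product of one-dimensional sums of `ψ`: the factor of an entry `n_q > a`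
is `∑_{n > a} ψ(n) ≤ (2/3) (a + 1)^(-3/2)` by comparison with an integral, and every other factor
is at most `∑ ψ ≤ 2`.
-/

/-- The number of rooted type II triangulations of a disc with m+2 boundary
vertices and n internal vertices. -/
noncomputable def phi2 (n m : ℕ) : ℝ :=
  (2 ^ (n + 1) * Nat.factorial (2 * m + 1) * Nat.factorial (2 * m + 3 * n) : ℝ) /
    ((Nat.factorial m) ^ 2 * Nat.factorial n * Nat.factorial (2 * m + 2 * n + 2))

open Finset Real
open scoped Nat

noncomputable def psi (n : ℕ) : ℝ := ((n : ℝ) + 1) ^ (-(5 / 2) : ℝ)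

lemma psi_pos (n : ℕ) : 0 < psi n := by unfold psi; positivity

lemma psi_zero : psi 0 = 1 := by simp [psi]

lemma psi_sq (n : ℕ) : psi n ^ 2 = (((n : ℝ) + 1) ^ 5)⁻¹ := by
  rw [psi, ← rpow_natCast, ← rpow_mul (by positivity),
    show (-(5 / 2) : ℝ) * (2 : ℕ) = -(5 : ℕ) by norm_num, rpow_neg (by positivity), rpow_natCast]

lemma psi_le_of_le_mul {k N n : ℕ} (hN : 0 < N) (h : N ≤ k * n) :
    psi n ≤ (k : ℝ) ^ (5 / 2 : ℝ) * (N : ℝ) ^ (-(5 / 2) : ℝ) := by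
  have hk : 0 < k := Nat.pos_of_ne_zero (by rintro rfl; omega)
  have hle : (N : ℝ) / k ≤ n + 1 := by
    rw [div_le_iff₀ (by positivity)]
    have : (N : ℝ) ≤ k * n := by exact_mod_cast h
    nlinarith
  calc psi n ≤ ((N : ℝ) / k) ^ (-(5 / 2) : ℝ) :=
        rpow_le_rpow_of_nonpos (by positivity) hle (by norm_num)
    _ = (k : ℝ) ^ (5 / 2 : ℝ) * (N : ℝ) ^ (-(5 / 2) : ℝ) := by
        rw [div_rpow (by positivity) (by positivity), rpow_neg (by positivity),
          rpow_neg (by positivity), div_eq_mul_inv, inv_inv, mul_comm]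

lemma sum_Ioc_psi_le (a N : ℕ) :
    ∑ n ∈ Ioc a N, psi n ≤ 2 / 3 * ((a : ℝ) + 1) ^ (-(3 / 2) : ℝ) := by
  rcases le_total N a with hNa | haN
  · rw [Ioc_eq_empty_of_le hNa, sum_empty]; positivity
  have hanti : AntitoneOn (fun x : ℝ => (x + 1) ^ (-(5 / 2) : ℝ)) (Set.Icc (a : ℝ) N) :=
    fun x hx y _ hxy => rpow_le_rpow_of_nonpos
      (by linarith [hx.1, (Nat.cast_nonneg a : (0 : ℝ) ≤ a)]) (by linarith) (by norm_num)
  have hint : ∫ x in (a : ℝ)..N, (x + 1) ^ (-(5 / 2) : ℝ)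
      = 2 / 3 * (((a : ℝ) + 1) ^ (-(3 / 2) : ℝ) - ((N : ℝ) + 1) ^ (-(3 / 2) : ℝ)) := by
    rw [intervalIntegral.integral_comp_add_right (fun x : ℝ => x ^ (-(5 / 2) : ℝ)),
      integral_rpow (Or.inr ⟨by norm_num, ?_⟩)]
    · norm_num; ring
    · rw [Set.mem_uIcc]; push Not; constructor <;> intro h <;> linarith
  calc ∑ n ∈ Ioc a N, psi n = ∑ i ∈ Ico a N, ((((i + 1 : ℕ) : ℝ)) + 1) ^ (-(5 / 2) : ℝ) := by
        rw [← Ico_add_one_add_one_eq_Ioc, ← sum_Ico_add']; rfl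
    _ ≤ ∫ x in (a : ℝ)..N, (x + 1) ^ (-(5 / 2) : ℝ) := hanti.sum_le_integral_Ico haN
    _ ≤ 2 / 3 * ((a : ℝ) + 1) ^ (-(3 / 2) : ℝ) := by
        rw [hint]; gcongr; linarith [rpow_nonneg (by positivity : (0 : ℝ) ≤ N + 1) (-(3 / 2) : ℝ)]

lemma sum_range_psi_le (N : ℕ) : ∑ n ∈ range (N + 1), psi n ≤ 2 := by
  rw [range_eq_Ico, sum_eq_sum_Ico_succ_bot (Nat.succ_pos N), Nat.succ_eq_add_one,
    Ico_add_one_add_one_eq_Ioc, psi_zero]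
  have := sum_Ioc_psi_le 0 N
  norm_num at this
  linarith

lemma cast_choose_three_mul_succ (n : ℕ) :
    ((3 * (n + 1)).choose (n + 1) : ℝ) * ((n + 1) * (2 * n + 1) * (2 * n + 2)) =
      (3 * n).choose n * ((3 * n + 1) * (3 * n + 2) * (3 * n + 3)) := by
  rw [Nat.cast_choose ℝ (by omega), Nat.cast_choose ℝ (by omega),
    show 3 * (n + 1) - (n + 1) = 2 * n + 1 + 1 by omega, show 3 * n - n = 2 * n by omega,
    show 3 * (n + 1) = 3 * n + 1 + 1 + 1 by ring]
  simp only [Nat.factorial_succ]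
  push_cast
  field_simp
  ring

lemma choose_three_mul_sq_le (n : ℕ) :
    ((3 * n).choose n : ℝ) ^ 2 * (n + 1) * 16 ^ n ≤ 729 ^ n := by
  induction n with
  | zero => norm_num
  | succ n ih =>
    set c : ℝ := (((3 * n).choose n : ℕ) : ℝ)
    set D : ℝ := (n + 1) * (2 * n + 1) * (2 * n + 2)
    have hD : 0 < D := by positivity
    have hsq : ((3 * (n + 1)).choose (n + 1) : ℝ) ^ 2 * D ^ 2 =
        c ^ 2 * ((3 * n + 1) * (3 * n + 2) * (3 * n + 3)) ^ 2 := by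
      rw [← mul_pow, cast_choose_three_mul_succ, mul_pow]
    have hpoly : 16 * ((3 * n + 1) * (3 * n + 2) * (3 * n + 3) : ℝ) ^ 2 * (n + 2) ≤
        729 * D ^ 2 * (n + 1) := by
      have hn : (0 : ℝ) ≤ n := n.cast_nonneg
      nlinarith [pow_nonneg hn 3, pow_nonneg hn 4, pow_nonneg hn 5, pow_nonneg hn 2]
    refine le_of_mul_le_mul_right ?_ (pow_pos hD 2)
    calc ((3 * (n + 1)).choose (n + 1) : ℝ) ^ 2 * ((n + 1 : ℕ) + 1) * 16 ^ (n + 1) * D ^ 2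
        = 16 ^ n * c ^ 2 * (16 * ((3 * n + 1) * (3 * n + 2) * (3 * n + 3)) ^ 2 * (n + 2)) := by
          push_cast
          linear_combination (16 ^ n * 16 * ((n : ℝ) + 2)) * hsq
      _ ≤ 16 ^ n * c ^ 2 * (729 * D ^ 2 * (n + 1)) := by gcongr
      _ = c ^ 2 * (n + 1) * 16 ^ n * (729 * D ^ 2) := by ring
      _ ≤ 729 ^ n * (729 * D ^ 2) := by gcongr
      _ = 729 ^ (n + 1) * D ^ 2 := by ring

lemma two_pow_mul_choose_div_le (n : ℕ) :
    2 ^ n * (3 * n).choose n / ((n : ℝ) + 1) ^ 2 ≤ (27 / 2) ^ n * psi n := by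
  refine (pow_le_pow_iff_left₀ (by positivity)
    (mul_nonneg (by positivity) (psi_pos n).le) two_ne_zero).1 ?_
  rw [mul_pow, psi_sq, div_pow, div_le_iff₀ (by positivity)]
  have h4 : ((2 : ℝ) ^ n) ^ 2 = 4 ^ n := by rw [← pow_mul, mul_comm, pow_mul]; norm_num
  have h729 : ((27 / 2 : ℝ) ^ n) ^ 2 = 729 ^ n / 4 ^ n := by
    rw [← div_pow, ← pow_mul, mul_comm, pow_mul]; norm_num
  have h16 : (16 : ℝ) ^ n = 4 ^ n * 4 ^ n := by rw [← mul_pow]; norm_num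
  have := choose_three_mul_sq_le n
  rw [h16] at this
  rw [mul_pow, h4, h729]
  field_simp
  linarith

lemma factorial_add_le_mul_pow (a b : ℕ) : (a + b)! ≤ a ! * (a + b) ^ b := by
  rw [← Nat.factorial_mul_descFactorial (Nat.le_add_left b a), Nat.add_sub_cancel]
  exact Nat.mul_le_mul_left _ (Nat.descFactorial_le_pow _ _)

lemma factorial_two_mul_add_three_mul_le (n m : ℕ) :
    (2 * m + 3 * n)! * (2 * n)! * (n + 1) ^ 2 ≤
      (3 * n)! * (2 * m + 2 * n + 2)! * (2 * m + 3) ^ (2 * m) :=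
  calc (2 * m + 3 * n)! * (2 * n)! * (n + 1) ^ 2
      ≤ (3 * n)! * (3 * n + 2 * m) ^ (2 * m) * (2 * n)! * (n + 1) ^ 2 := by
        gcongr; rw [add_comm]; exact factorial_add_le_mul_pow _ _
    _ ≤ (3 * n)! * ((2 * m + 3) * (2 * n + 1)) ^ (2 * m) * (2 * n)! * (2 * n + 1) ^ 2 := by
        gcongr <;> nlinarith
    _ = (3 * n)! * (2 * m + 3) ^ (2 * m) * ((2 * n)! * (2 * n + 1) ^ (2 * m + 2)) := by
        rw [mul_pow]; ring
    _ ≤ (3 * n)! * (2 * m + 3) ^ (2 * m) * (2 * m + 2 * n + 2)! := by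
        gcongr
        rw [show 2 * m + 2 * n + 2 = 2 * n + (2 * m + 2) by ring]
        exact Nat.factorial_mul_pow_le_factorial
    _ = _ := by ring

noncomputable def phi2Coeff (m : ℕ) : ℝ :=
  2 * (2 * m + 1)! * (2 * m + 3) ^ (2 * m) / (m ! : ℝ) ^ 2

lemma phi2Coeff_pos (m : ℕ) : 0 < phi2Coeff m := by unfold phi2Coeff; positivity

lemma phi2_le_choose (n m : ℕ) :
    phi2 n m ≤ phi2Coeff m * (2 ^ n * (3 * n).choose n / ((n : ℝ) + 1) ^ 2) := by
  have key : ((2 * m + 3 * n)! * (2 * n)! * (n + 1) ^ 2 : ℝ) ≤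
      (3 * n)! * (2 * m + 2 * n + 2)! * (2 * m + 3) ^ (2 * m) := by
    exact_mod_cast factorial_two_mul_add_three_mul_le n m
  rw [phi2, phi2Coeff, Nat.cast_choose ℝ (by omega), show 3 * n - n = 2 * n by omega,
    div_le_iff₀ (by positivity)]
  field_simp
  calc _ = 2 ^ (n + 1) * ((2 * m + 3 * n)! * (2 * n)! * ((n : ℝ) + 1) ^ 2) := by ring
    _ ≤ 2 ^ (n + 1) * ((3 * n)! * (2 * m + 2 * n + 2)! * (2 * m + 3) ^ (2 * m)) := by gcongr
    _ = _ := by ring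

lemma phi2_le (n m : ℕ) : phi2 n m ≤ phi2Coeff m * (27 / 2) ^ n * psi n := by
  rw [mul_assoc]
  exact (phi2_le_choose n m).trans
    (mul_le_mul_of_nonneg_left (two_pow_mul_choose_div_le n) (phi2Coeff_pos m).le)

lemma sum_biUnion_le_sum_sum {α β M : Type*} [DecidableEq β] [AddCommMonoid M] [PartialOrder M]
    [IsOrderedAddMonoid M] {s : Finset α} {t : α → Finset β} {w : β → M} (hw : ∀ x, 0 ≤ w x) :
    ∑ x ∈ s.biUnion t, w x ≤ ∑ i ∈ s, ∑ x ∈ t i, w x := by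
  classical
  induction s using Finset.induction_on with
  | empty => simp
  | insert i s hi ih =>
    rw [biUnion_insert, sum_insert hi]
    calc ∑ x ∈ t i ∪ s.biUnion t, w x ≤ ∑ x ∈ t i, w x + ∑ x ∈ s.biUnion t, w x := by
          rw [← sum_union_inter]; exact le_add_of_nonneg_right (sum_nonneg fun x _ => hw x)
      _ ≤ _ := by gcongr

section Tuples

variable {ι : Type*} [Fintype ι]

lemma prod_phi2_le (f m : ι → ℕ) :
    ∏ i, phi2 (f i) (m i) ≤
      (∏ i, phi2Coeff (m i)) * (27 / 2) ^ (∑ i, f i) * ∏ i, psi (f i) := by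
  calc ∏ i, phi2 (f i) (m i) ≤ ∏ i, phi2Coeff (m i) * (27 / 2) ^ f i * psi (f i) :=
        prod_le_prod (fun i _ => by unfold phi2; positivity) fun i _ => phi2_le _ _
    _ = _ := by rw [prod_mul_distrib, prod_mul_distrib, prod_pow_eq_pow_sum]

variable [DecidableEq ι]

lemma prod_psi_eq_mul_prod_update_zero (f : ι → ℕ) (p : ι) :
    ∏ i, psi (f i) = psi (f p) * ∏ i, psi (Function.update f p 0 i) := by
  simp_rw [Function.apply_update (fun _ => psi), psi_zero]
  rw [prod_update_of_mem (mem_univ p), one_mul, sdiff_singleton_eq_erase,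
    mul_prod_erase _ (fun i => psi (f i)) (mem_univ p)]

lemma add_sum_update_zero (f : ι → ℕ) (p : ι) :
    f p + ∑ i, Function.update f p 0 i = ∑ i, f i := by
  rw [sum_update_of_mem (mem_univ p), zero_add, ← add_sum_erase _ _ (mem_univ p),
    sdiff_singleton_eq_erase]

lemma injOn_update_zero (p : ι) (N : ℕ) :
    Set.InjOn (fun f : ι → ℕ => Function.update f p 0) {f | ∑ i, f i = N} := by
  intro f hf g hg h
  change ∑ i, f i = N at hf
  change ∑ i, g i = N at hg
  change Function.update f p 0 = Function.update g p 0 at h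
  have hp : f p = g p := by
    have hf' := add_sum_update_zero f p
    have hg' := add_sum_update_zero g p
    rw [h] at hf'
    omega
  calc f = Function.update (Function.update f p 0) p (f p) := by simp
    _ = g := by rw [h, hp]; simp

lemma sum_prod_psi_update_zero_le {s : Finset (ι → ℕ)} {N a : ℕ} {p q : ι} (hpq : p ≠ q)
    (hs : ∀ f ∈ s, ∑ i, f i = N ∧ a < f q) :
    ∑ f ∈ s, ∏ i, psi (Function.update f p 0 i) ≤
      2 ^ Fintype.card ι * ((a : ℝ) + 1) ^ (-(3 / 2) : ℝ) := by
  set t : ι → Finset ℕ := fun i => if i = q then Ioc a N else range (N + 1)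
  have hmaps : s.image (fun f => Function.update f p 0) ⊆ Fintype.piFinset t := by
    simp only [subset_iff, mem_image, Fintype.mem_piFinset, forall_exists_index, and_imp]
    rintro _ f hf rfl i
    obtain ⟨hsum, hq⟩ := hs f hf
    have hfi : f i ≤ N := hsum ▸ single_le_sum (fun j _ => Nat.zero_le (f j)) (mem_univ i)
    by_cases hip : i = p
    · subst hip; simp [t, hpq]
    · by_cases hiq : i = q
      · subst hiq; simp [t, hip, hq, hfi]
      · simp [t, hip, hiq]; omega
  have hfactor (i : ι) : ∑ x ∈ t i, psi x ≤ 2 := by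
    refine le_trans (sum_le_sum_of_subset_of_nonneg ?_ fun x _ _ => (psi_pos x).le)
      (sum_range_psi_le N)
    intro x
    by_cases hiq : i = q <;> simp [t, hiq]
  calc ∑ f ∈ s, ∏ i, psi (Function.update f p 0 i)
      = ∑ g ∈ s.image (fun f => Function.update f p 0), ∏ i, psi (g i) := by
        rw [sum_image ((injOn_update_zero p N).mono fun f hf => (hs f hf).1)]
    _ ≤ ∑ g ∈ Fintype.piFinset t, ∏ i, psi (g i) :=
        sum_le_sum_of_subset_of_nonneg hmaps fun g _ _ => prod_nonneg fun i _ => (psi_pos _).le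
    _ = ∏ i, ∑ x ∈ t i, psi x := (prod_univ_sum t fun _ => psi).symm
    _ = (∑ x ∈ Ioc a N, psi x) * ∏ i ∈ univ.erase q, ∑ x ∈ t i, psi x := by
        rw [← mul_prod_erase _ _ (mem_univ q)]; simp [t]
    _ ≤ ((a : ℝ) + 1) ^ (-(3 / 2) : ℝ) * 2 ^ Fintype.card ι := by
        gcongr
        · exact prod_nonneg fun i _ => sum_nonneg fun x _ => (psi_pos x).le
        · linarith [sum_Ioc_psi_le a N, rpow_nonneg (by positivity : (0 : ℝ) ≤ a + 1) (-(3 / 2))]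
        · calc ∏ i ∈ univ.erase q, ∑ x ∈ t i, psi x ≤ 2 ^ (univ.erase q).card :=
                (prod_le_prod (fun i _ => sum_nonneg fun x _ => (psi_pos x).le)
                  fun i _ => hfactor i).trans_eq (prod_const 2)
            _ ≤ 2 ^ Fintype.card ι := pow_le_pow_right₀ (by norm_num) card_erase_le
    _ = _ := mul_comm _ _

lemma sum_prod_psi_le_of_le_card_mul {s : Finset (ι → ℕ)} {N a : ℕ} {p q : ι} (hpq : p ≠ q)
    (hN : 0 < N) (hs : ∀ f ∈ s, ∑ i, f i = N ∧ N ≤ Fintype.card ι * f p ∧ a < f q) :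
    ∑ f ∈ s, ∏ i, psi (f i) ≤ (Fintype.card ι : ℝ) ^ (5 / 2 : ℝ) * (N : ℝ) ^ (-(5 / 2) : ℝ) *
      (2 ^ Fintype.card ι * ((a : ℝ) + 1) ^ (-(3 / 2) : ℝ)) := by
  calc ∑ f ∈ s, ∏ i, psi (f i)
      ≤ ∑ f ∈ s, (Fintype.card ι : ℝ) ^ (5 / 2 : ℝ) * (N : ℝ) ^ (-(5 / 2) : ℝ) *
          ∏ i, psi (Function.update f p 0 i) := by
        gcongr with f hf
        rw [prod_psi_eq_mul_prod_update_zero f p]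
        exact mul_le_mul_of_nonneg_right (psi_le_of_le_mul hN (hs f hf).2.1)
          (prod_nonneg fun i _ => (psi_pos _).le)
    _ ≤ _ := by
        rw [← mul_sum]
        gcongr
        exact sum_prod_psi_update_zero_le hpq fun f hf => ⟨(hs f hf).1, (hs f hf).2.2⟩

lemma exists_ne_sum_le_card_mul_lt {f : ι → ℕ} {a : ℕ}
    (h : ∃ i j, i ≠ j ∧ a < f i ∧ a < f j) :
    ∃ p q, p ≠ q ∧ ∑ i, f i ≤ Fintype.card ι * f p ∧ a < f q := by
  obtain ⟨i, j, hij, hi, hj⟩ := h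
  obtain ⟨p, -, hp⟩ := exists_max_image univ f ⟨i, mem_univ i⟩
  have hsum : ∑ i, f i ≤ Fintype.card ι * f p := by
    simpa using sum_le_card_nsmul univ f (f p) fun i _ => hp i (mem_univ i)
  by_cases hip : i = p
  · exact ⟨p, j, hip ▸ hij, hsum, hj⟩
  · exact ⟨p, i, Ne.symm hip, hsum, hi⟩

lemma sum_prod_psi_le_of_two_gt {s : Finset (ι → ℕ)} {N a : ℕ} (hN : 0 < N)
    (hs : ∀ f ∈ s, ∑ i, f i = N ∧ ∃ i j, i ≠ j ∧ a < f i ∧ a < f j) :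
    ∑ f ∈ s, ∏ i, psi (f i) ≤ (Fintype.card ι : ℝ) ^ 2 * ((Fintype.card ι : ℝ) ^ (5 / 2 : ℝ) *
      (N : ℝ) ^ (-(5 / 2) : ℝ) * (2 ^ Fintype.card ι * ((a : ℝ) + 1) ^ (-(3 / 2) : ℝ))) := by
  set G : ι × ι → Finset (ι → ℕ) := fun pq =>
    s.filter fun f => N ≤ Fintype.card ι * f pq.1 ∧ a < f pq.2
  have hcover : s ⊆ univ.offDiag.biUnion G := by
    intro f hf
    obtain ⟨hsum, htwo⟩ := hs f hf
    obtain ⟨p, q, hpq, hp, hq⟩ := exists_ne_sum_le_card_mul_lt htwo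
    simp only [mem_biUnion, mem_offDiag, mem_univ, true_and, mem_filter, G]
    exact ⟨(p, q), hpq, hf, hsum ▸ hp, hq⟩
  have hnonneg (f : ι → ℕ) : 0 ≤ ∏ i, psi (f i) := prod_nonneg fun i _ => (psi_pos _).le
  calc ∑ f ∈ s, ∏ i, psi (f i) ≤ ∑ f ∈ univ.offDiag.biUnion G, ∏ i, psi (f i) :=
        sum_le_sum_of_subset_of_nonneg hcover fun f _ _ => hnonneg f
    _ ≤ ∑ pq ∈ univ.offDiag, ∑ f ∈ G pq, ∏ i, psi (f i) := sum_biUnion_le_sum_sum hnonneg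
    _ ≤ ∑ pq ∈ (univ : Finset ι).offDiag, (Fintype.card ι : ℝ) ^ (5 / 2 : ℝ) *
          (N : ℝ) ^ (-(5 / 2) : ℝ) * (2 ^ Fintype.card ι * ((a : ℝ) + 1) ^ (-(3 / 2) : ℝ)) := by
        refine sum_le_sum fun pq hpq => sum_prod_psi_le_of_le_card_mul
          (mem_offDiag.1 hpq).2.2 hN fun f hf => ?_
        obtain ⟨hfs, hp, hq⟩ := mem_filter.1 hf
        exact ⟨(hs f hfs).1, hp, hq⟩
    _ ≤ _ := by
        rw [sum_const, nsmul_eq_mul]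
        gcongr
        rw [offDiag_card, Finset.card_univ]
        exact_mod_cast (Nat.sub_le _ _).trans_eq (sq _).symm

end Tuples

theorem one_big_component (k : ℕ) (hk : 2 ≤ k) (m : Fin k → ℕ) :
    ∃ C : ℝ, 0 < C ∧ ∀ N a : ℕ, 0 < N → 0 < a →
      ∑ f ∈ (Fintype.piFinset (fun _ : Fin k => Finset.range (N + 1))).filter
          (fun f => (∑ i, f i = N) ∧ ∃ i j, i ≠ j ∧ a < f i ∧ a < f j),
        ∏ i, phi2 (f i) (m i)
        ≤ C * (27 / 2 : ℝ) ^ N * (N : ℝ) ^ (-(5 / 2) : ℝ) * (a : ℝ) ^ (-(3 / 2) : ℝ) := by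
  set K := ∏ i, phi2Coeff (m i)
  have hK : 0 < K := prod_pos fun i _ => phi2Coeff_pos (m i)
  have hk0 : (0 : ℝ) < k := by exact_mod_cast (show 0 < k by omega)
  refine ⟨K * k ^ 2 * ((k : ℝ) ^ (5 / 2 : ℝ) * 2 ^ k), by positivity, fun N a hN ha => ?_⟩
  set F := (Fintype.piFinset (fun _ : Fin k => Finset.range (N + 1))).filter
    (fun f => (∑ i, f i = N) ∧ ∃ i j, i ≠ j ∧ a < f i ∧ a < f j)
  have hF (f) (hf : f ∈ F) : ∑ i, f i = N ∧ ∃ i j, i ≠ j ∧ a < f i ∧ a < f j := (mem_filter.1 hf).2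
  have ha' : ((a : ℝ) + 1) ^ (-(3 / 2) : ℝ) ≤ (a : ℝ) ^ (-(3 / 2) : ℝ) :=
    rpow_le_rpow_of_nonpos (by exact_mod_cast ha) (by linarith) (by norm_num)
  have hpsi := sum_prod_psi_le_of_two_gt hN hF
  simp only [Fintype.card_fin] at hpsi
  calc ∑ f ∈ F, ∏ i, phi2 (f i) (m i) ≤ ∑ f ∈ F, K * (27 / 2) ^ N * ∏ i, psi (f i) :=
        sum_le_sum fun f hf => (hF f hf).1 ▸ prod_phi2_le f m
    _ = K * (27 / 2) ^ N * ∑ f ∈ F, ∏ i, psi (f i) := by rw [mul_sum]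
    _ ≤ K * (27 / 2) ^ N * ((k : ℝ) ^ 2 * ((k : ℝ) ^ (5 / 2 : ℝ) * (N : ℝ) ^ (-(5 / 2) : ℝ) *
          (2 ^ k * (a : ℝ) ^ (-(3 / 2) : ℝ)))) :=
        mul_le_mul_of_nonneg_left (hpsi.trans (by gcongr)) (by positivity)
    _ = _ := by ring
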